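/- arXiv:2310.13792 — 6 statements merged into one kernel-verified Lean document; each statement's English description precedes it below -/
import Mathlib

section
/- In the density improvement iteration for maximizing f(S)/|S| (with f normalized supermodular on finite V): if S_t is any minimizer of β_t|S| − f(S), S_{t+1} is any minimizer of β_{t+1}|S| − f(S), where β_{t+1} = f(S_t)/|S_t|, and the values satisfy β_t|S_t| − f(S_t) < 0 and β_{t+1}|S_{t+1}| − f(S_{t+1}) < 0 and β_t < β_{t+1} < f(S_{t+1})/|S_{t+1}|, then |S_t| > |S_{t+1}|. -/
/-- in the density improvement iteration, the sizes of the
successive minimizers strictly decrease. -/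
theorem stmt7 {V : Type*} [Fintype V] [DecidableEq V]
    (f : Finset V → ℝ) (hf0 : f ∅ = 0)
    (hsuper : ∀ S T : Finset V, f S + f T ≤ f (S ∩ T) + f (S ∪ T))
    (βt βt1 : ℝ) (St St1 : Finset V)
    (hmin_t : ∀ S : Finset V, βt * St.card - f St ≤ βt * S.card - f S)
    (hmin_t1 : ∀ S : Finset V, βt1 * St1.card - f St1 ≤ βt1 * S.card - f S)
    (hβ : βt1 = f St / St.card)
    (hneg_t : βt * St.card - f St < 0)
    (hneg_t1 : βt1 * St1.card - f St1 < 0)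
    (hlt : βt < βt1) (hlt' : βt1 < f St1 / St1.card) :
    St1.card < St.card := by
  have hSt : (0:ℝ) < St.card := by
    rcases Nat.eq_zero_or_pos St.card with h | h
    · exfalso
      rw [Finset.card_eq_zero] at h
      subst h
      simp [hf0] at hneg_t
    · exact_mod_cast h
  have hSt1 : (0:ℝ) < St1.card := by
    rcases Nat.eq_zero_or_pos St1.card with h | h
    · exfalso
      rw [Finset.card_eq_zero] at h
      subst h
      simp [hf0] at hneg_t1
    · exact_mod_cast h
  have h1 : βt1 * St.card = f St := by
    rw [hβ]; field_simp
  have h2 : βt1 * St1.card < f St1 := (lt_div_iff₀ hSt1).mp hlt'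
  have h3 := hmin_t St1
  by_contra hc
  push_neg at hc
  have hc' : (St.card : ℝ) ≤ St1.card := by exact_mod_cast hc
  nlinarith [mul_nonneg (sub_nonneg.mpr hlt.le) (sub_nonneg.mpr hc')]
end

section
/- The density improvement algorithm (start with S_0 = V, β_{t+1} = f(S_t)/|S_t|, S_{t+1} a minimizer of β_{t+1}|S| − f(S), stop when β_t|S_t| − f(S_t) = 0) terminates after at most |V| + 1 iterations, and upon termination S_{T−1} maximizes f(S)/|S| over nonempty S ⊆ V. -/
/-- the density improvement algorithm terminates after at most
`|V| + 1` iterations, and upon termination `S_{T−1}` maximizes `f(S)/|S|`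
over nonempty subsets. -/
theorem stmt9 {V : Type*} [Fintype V] [DecidableEq V] [Nonempty V]
    (f : Finset V → ℝ) (hf0 : f ∅ = 0)
    (hsuper : ∀ S T : Finset V, f S + f T ≤ f (S ∩ T) + f (S ∪ T))
    (S : ℕ → Finset V) (β : ℕ → ℝ)
    (hS0 : S 0 = Finset.univ)
    (hβ : ∀ t : ℕ, 1 ≤ t → β t = f (S (t - 1)) / (S (t - 1)).card)
    (hmin : ∀ t : ℕ, 1 ≤ t →
      ∀ S' : Finset V, β t * (S t).card - f (S t) ≤ β t * S'.card - f S') :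
    ∃ T : ℕ, 1 ≤ T ∧ T ≤ Fintype.card V + 1 ∧
      β T * (S T).card - f (S T) = 0 ∧
      ∀ S' : Finset V, S'.Nonempty →
        f S' / S'.card ≤ f (S (T - 1)) / (S (T - 1)).card := by
  set n := Fintype.card V with hn
  have hn0 : 0 < n := Fintype.card_pos
  -- the minimum value is always ≤ 0 (plug in the previous set)
  have hβmul : ∀ t : ℕ, 1 ≤ t → (S (t-1)).Nonempty →
      β t * ((S (t-1)).card : ℝ) = f (S (t-1)) := by
    intro t ht hne
    have hc : ((S (t-1)).card : ℝ) ≠ 0 := by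
      exact_mod_cast (Finset.card_pos.mpr hne).ne'
    rw [hβ t ht, div_mul_cancel₀ _ hc]
  have hle : ∀ t : ℕ, 1 ≤ t → β t * (S t).card - f (S t) ≤ 0 := by
    intro t ht
    have h := hmin t ht (S (t-1))
    rcases Finset.eq_empty_or_nonempty (S (t-1)) with h0 | h0
    · rw [h0] at h; simp [hf0] at h; linarith
    · rw [hβmul t ht h0] at h; linarith
  -- if the minimum is negative, the current set is nonempty
  have hne_of_neg : ∀ t : ℕ, β t * (S t).card - f (S t) < 0 → (S t).Nonempty := by
    intro t hlt
    rcases Finset.eq_empty_or_nonempty (S t) with h | h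
    · rw [h] at hlt; simp [hf0] at hlt
    · exact h
  -- main invariant: while the minimum stays negative, |S_k| + k ≤ n
  have key : ∀ k : ℕ, (∀ t, 1 ≤ t → t ≤ k → β t * (S t).card - f (S t) < 0) →
      (S k).card + k ≤ n := by
    intro k
    induction k with
    | zero => intro _; simp [hS0, hn]
    | succ k ih =>
      intro hneg
      have hk1 : β (k+1) * (S (k+1)).card - f (S (k+1)) < 0 :=
        hneg (k+1) (by omega) (le_refl _)
      have hβk1 : β (k+1) = f (S k) / ((S k).card : ℝ) := by
        have := hβ (k+1) (by omega)
        simpa using this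
      rcases Nat.eq_zero_or_pos k with rfl | hk
      · -- first step: S 1 ≠ univ, so |S 1| < n
        have hk1' : β 1 * ((S 1).card : ℝ) - f (S 1) < 0 := hk1
        have hlt : (S 1).card < n := by
          rcases lt_or_eq_of_le (Finset.card_le_univ (S 1)) with h | h
          · exact h
          · exfalso
            have huniv : S 1 = Finset.univ := Finset.card_eq_iff_eq_univ _ |>.mp h
            have hne : (S 0).Nonempty := by rw [hS0]; exact Finset.univ_nonempty
            have h2 : β 1 * ((S 0).card : ℝ) = f (S 0) := hβmul 1 le_rfl hne
            rw [huniv] at hk1'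
            rw [hS0] at h2
            linarith
        show (S 1).card + 1 ≤ n
        omega
      · -- inductive step: |S (k+1)| < |S k|
        have hgk : β k * (S k).card - f (S k) < 0 := hneg k hk (by omega)
        have hSkne : (S k).Nonempty := hne_of_neg k hgk
        have hck : (0:ℝ) < ((S k).card : ℝ) := by
          exact_mod_cast Finset.card_pos.mpr hSkne
        have hβc0 : β (k+1) * ((S k).card : ℝ) = f (S k) := by
          rw [hβk1, div_mul_cancel₀ _ hck.ne']
        have hbgt : β k < β (k+1) := by
          rw [hβk1]
          rw [lt_div_iff₀ hck]
          linarith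
        have h1 := hmin k hk (S (k+1))
        have h2 := hmin (k+1) (by omega) (S k)
        -- cards are nonincreasing
        have hccnat : (S (k+1)).card ≤ (S k).card := by
          by_contra hcon
          push_neg at hcon
          have hcast : ((S k).card : ℝ) < ((S (k+1)).card : ℝ) := by exact_mod_cast hcon
          nlinarith [mul_pos (sub_pos.mpr hbgt) (sub_pos.mpr hcast)]
        have hlt : (S (k+1)).card < (S k).card := by
          rcases lt_or_eq_of_le hccnat with h | h
          · exact h
          · exfalso
            rw [h] at h1 hk1
            linarith
        have hprev : (S k).card + k ≤ n := ih (fun t ht htk => hneg t ht (by omega))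
        omega
  -- existence of a terminating time T ≤ n
  have hex : ∃ T : ℕ, 1 ≤ T ∧ T ≤ n ∧ β T * (S T).card - f (S T) = 0 := by
    by_contra hcon
    push_neg at hcon
    have hneg : ∀ t, 1 ≤ t → t ≤ n → β t * (S t).card - f (S t) < 0 := by
      intro t ht htn
      exact lt_of_le_of_ne (hle t ht) (hcon t ht htn)
    have h := key n hneg
    have hgn : β n * (S n).card - f (S n) < 0 := hneg n hn0 (le_refl _)
    have := Finset.card_pos.mpr (hne_of_neg n hgn)
    omega
  obtain ⟨T, hT1, hTn, hTz⟩ := hex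
  refine ⟨T, hT1, by omega, hTz, ?_⟩
  intro S' hS'
  have hc' : (0:ℝ) < (S'.card : ℝ) := by exact_mod_cast Finset.card_pos.mpr hS'
  have h := hmin T hT1 S'
  rw [hTz] at h
  rw [div_le_iff₀ hc', ← hβ T hT1]
  linarith
end

section
/- In the extended hypergraph H_β (source s with edge (s,v) of weight ndeg(v) for each v, sink t with edge (v,t) of weight β + p(v) for each v, and each hyperedge e with splitting function g_e(A) = min(|e∩A|, ∞|e\A|)/|e|), for every S ⊆ V the s-t cut induced by S ∪ {s} has value cut(S ∪ {s}) = nvol(H) − e[S] + β|S| + p(S). Consequently, the minimum s-t cut of H_β is strictly smaller than nvol(H) if and only if there exists a nonempty S ⊆ V with (e[S] − p(S))/|S| > β. -/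
/-- cut value identity in the extended hypergraph `H_β`, and the
resulting characterization of when the min s-t cut is below `nvol(H)`. -/
theorem stmt11 {V : Type*} [Fintype V] [DecidableEq V]
    (E : Finset (Finset V)) (hE : ∀ e ∈ E, 2 ≤ e.card)
    (p : V → ℝ) (hp : ∀ v, 0 ≤ p v) (β : ℝ) (hβ : 0 ≤ β)
    (ndeg : V → ℝ)
    (hndeg : ∀ v, ndeg v = ∑ e ∈ E.filter (fun e => v ∈ e), (1 : ℝ) / e.card)
    (g : Finset V → Finset V → ℝ)
    (hg : ∀ e A : Finset V,
      g e A = if e ⊆ A then 0 else ((e ∩ A).card : ℝ) / e.card)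
    (nvolH : ℝ) (hnvolH : nvolH = ∑ v : V, ndeg v)
    (cutval : Finset V → ℝ)
    (hcut : ∀ S : Finset V, cutval S =
      (∑ v ∈ Finset.univ \ S, ndeg v) + (∑ v ∈ S, (β + p v)) + ∑ e ∈ E, g e S) :
    (∀ S : Finset V, cutval S =
        nvolH - ((E.filter (fun e => e ⊆ S)).card : ℝ)
          + β * S.card + ∑ v ∈ S, p v) ∧
    ((∃ S : Finset V, cutval S < nvolH) ↔
      ∃ S : Finset V, S.Nonempty ∧
        (((E.filter (fun e => e ⊆ S)).card : ℝ) - ∑ v ∈ S, p v) / S.card > β) := by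
  have key : ∀ S : Finset V, ∑ v ∈ S, ndeg v = ∑ e ∈ E, ((e ∩ S).card : ℝ) / e.card := by
    intro S
    simp_rw [hndeg, Finset.sum_filter]
    rw [Finset.sum_comm]
    refine Finset.sum_congr rfl fun e _ => ?_
    rw [Finset.sum_ite_mem, Finset.sum_const, nsmul_eq_mul, Finset.inter_comm]
    ring
  have main : ∀ S : Finset V, cutval S =
      nvolH - ((E.filter (fun e => e ⊆ S)).card : ℝ) + β * S.card + ∑ v ∈ S, p v := by
    intro S
    rw [hcut]
    have h1 : ∑ v ∈ Finset.univ \ S, ndeg v = nvolH - ∑ v ∈ S, ndeg v := by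
      rw [hnvolH, eq_sub_iff_add_eq, Finset.sum_sdiff (Finset.subset_univ S)]
    have h2 : ∑ e ∈ E, g e S =
        (∑ v ∈ S, ndeg v) - ((E.filter (fun e => e ⊆ S)).card : ℝ) := by
      have hsum : ∀ e ∈ E, g e S =
          ((e ∩ S).card : ℝ) / e.card - (if e ⊆ S then 1 else 0) := by
        intro e he
        have hcard : (e.card : ℝ) ≠ 0 := by
          have := hE e he; positivity
        rw [hg]
        by_cases h : e ⊆ S
        · simp [h, Finset.inter_eq_left.mpr h, div_self hcard]
        · simp [h]
      rw [Finset.sum_congr rfl hsum, Finset.sum_sub_distrib, key, Finset.sum_boole]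
    have h3 : ∑ v ∈ S, (β + p v) = β * S.card + ∑ v ∈ S, p v := by
      rw [Finset.sum_add_distrib, Finset.sum_const, nsmul_eq_mul, mul_comm]
    rw [h1, h2, h3]; ring
  refine ⟨main, ?_⟩
  constructor
  · rintro ⟨S, hS⟩
    rw [main] at hS
    have hne : S.Nonempty := by
      rcases S.eq_empty_or_nonempty with rfl | h
      · have : E.filter (fun e => e ⊆ (∅ : Finset V)) = ∅ := by
          rw [Finset.filter_eq_empty_iff]
          intro e he hsub
          have := hE e he
          rw [Finset.subset_empty.mp hsub] at this
          simp at this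
        rw [this] at hS
        simp at hS
      · exact h
    refine ⟨S, hne, ?_⟩
    have hpos : (0 : ℝ) < S.card := by exact_mod_cast hne.card_pos
    rw [gt_iff_lt, lt_div_iff₀ hpos]
    linarith
  · rintro ⟨S, hne, hS⟩
    refine ⟨S, ?_⟩
    rw [main]
    have hpos : (0 : ℝ) < S.card := by exact_mod_cast hne.card_pos
    rw [gt_iff_lt, lt_div_iff₀ hpos] at hS
    linarith
end

section
/- For a hypergraph H = (V,E) with seed set R ⊆ V such that e[R] > 0 (equivalently d(R) > 0), and locality parameter ε ≥ 2, every maximizer of d(S) = (e[S] − ε·vol(S∩\bar R)/2)/|S| over nonempty S ⊆ V can be replaced by S ∩ R without decreasing the objective; more precisely, for every nonempty S intersecting R, d(S) ≤ d(S ∩ R), and every S disjoint from R has d(S) ≤ 0 < d(R). Hence max over nonempty S ⊆ V of d(S) equals max over nonempty S ⊆ R of d(S). -/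
set_option linter.unusedSectionVars false

lemma sum_deg_eq {V : Type*} [DecidableEq V] (E : Finset (Finset V)) (T : Finset V) :
    ∑ v ∈ T, (E.filter (fun e => v ∈ e)).card = ∑ e ∈ E, (e ∩ T).card := by
  simp_rw [Finset.card_filter]
  rw [Finset.sum_comm]
  refine Finset.sum_congr rfl fun e _ => ?_
  rw [Finset.inter_comm, ← Finset.filter_mem_eq_inter, Finset.card_filter]

lemma edge_split {V : Type*} [DecidableEq V] (E : Finset (Finset V)) (S R : Finset V) :
    (E.filter (fun e => e ⊆ S)).card ≤
      (E.filter (fun e => e ⊆ S ∩ R)).card + ∑ e ∈ E, (e ∩ (S \ R)).card := by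
  classical
  have h1 : E.filter (fun e => e ⊆ S) =
      (E.filter (fun e => e ⊆ S ∩ R)) ∪ (E.filter (fun e => e ⊆ S ∧ ¬ e ⊆ R)) := by
    ext e
    simp only [Finset.mem_filter, Finset.mem_union, Finset.subset_inter_iff]
    tauto
  rw [h1]
  refine le_trans (Finset.card_union_le _ _) (Nat.add_le_add_left ?_ _)
  calc (E.filter (fun e => e ⊆ S ∧ ¬ e ⊆ R)).card
      = ∑ e ∈ E.filter (fun e => e ⊆ S ∧ ¬ e ⊆ R), 1 := by simp
    _ ≤ ∑ e ∈ E.filter (fun e => e ⊆ S ∧ ¬ e ⊆ R), (e ∩ (S \ R)).card := by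
        refine Finset.sum_le_sum fun e he => ?_
        simp only [Finset.mem_filter] at he
        obtain ⟨-, hS, hnR⟩ := he
        rw [Finset.not_subset] at hnR
        obtain ⟨v, hv, hvR⟩ := hnR
        refine Finset.card_pos.mpr ⟨v, ?_⟩
        simp [hv, hS hv, hvR]
    _ ≤ ∑ e ∈ E, (e ∩ (S \ R)).card :=
        Finset.sum_le_sum_of_subset (Finset.filter_subset _ _)

lemma edge_vol {V : Type*} [DecidableEq V] (E : Finset (Finset V))
    (hE : ∀ e ∈ E, 2 ≤ e.card) (S : Finset V) :
    2 * (E.filter (fun e => e ⊆ S)).card ≤ ∑ e ∈ E, (e ∩ S).card := by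
  calc 2 * (E.filter (fun e => e ⊆ S)).card
      = ∑ e ∈ E.filter (fun e => e ⊆ S), 2 := by
        rw [Finset.sum_const, smul_eq_mul, mul_comm]
    _ ≤ ∑ e ∈ E.filter (fun e => e ⊆ S), (e ∩ S).card := by
        refine Finset.sum_le_sum fun e he => ?_
        simp only [Finset.mem_filter] at he
        rw [Finset.inter_eq_left.mpr he.2]
        exact hE e he.1
    _ ≤ ∑ e ∈ E, (e ∩ S).card :=
        Finset.sum_le_sum_of_subset (Finset.filter_subset _ _)

/-- for `ε ≥ 2` and a seed set `R` with `e[R] > 0`, the anchored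
density objective is maximized within `R`. -/
theorem stmt13 {V : Type*} [Fintype V] [DecidableEq V]
    (E : Finset (Finset V)) (hE : ∀ e ∈ E, 2 ≤ e.card)
    (R : Finset V) (hR : 0 < (E.filter (fun e => e ⊆ R)).card
)
    (ε : ℝ) (hε : 2 ≤ ε)
    (deg : V → ℝ) (hdeg : ∀ v, deg v = ((E.filter (fun e => v ∈ e)).card : ℝ))
    (d : Finset V → ℝ)
    (hd : ∀ S : Finset V, d S =
      (((E.filter (fun e => e ⊆ S)).card : ℝ)
          - ε * (∑ v ∈ S \ R, deg v) / 2) / S.card) :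
    (∀ S : Finset V, S.Nonempty → (S ∩ R).Nonempty → d S ≤ d (S ∩ R)) ∧
    (∀ S : Finset V, S.Nonempty → S ∩ R = ∅ → d S ≤ 0) ∧
    0 < d R ∧
    sSup {x : ℝ | ∃ S : Finset V, S.Nonempty ∧ x = d S} =
      sSup {x : ℝ | ∃ S : Finset V, S.Nonempty ∧ S ⊆ R ∧ x = d S} := by
  classical
  -- volume rewrite
  have hvol : ∀ T : Finset V, ∑ v ∈ T, deg v = ((∑ e ∈ E, (e ∩ T).card : ℕ) : ℝ) := by
    intro T
    rw [← sum_deg_eq E T, Nat.cast_sum]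
    exact Finset.sum_congr rfl fun v _ => hdeg v
  have hvol_nonneg : ∀ T : Finset V, (0:ℝ) ≤ ∑ v ∈ T, deg v := by
    intro T; rw [hvol]; exact Nat.cast_nonneg _
  -- d of a subset of R is just e[S]/|S|
  have hdsub : ∀ S : Finset V, S ⊆ R →
      d S = ((E.filter (fun e => e ⊆ S)).card : ℝ) / S.card := by
    intro S hS
    rw [hd S]
    have : S \ R = ∅ := Finset.sdiff_eq_empty_iff_subset.mpr hS
    rw [this, Finset.sum_empty, mul_zero, zero_div, sub_zero]
  have hdsub_nonneg : ∀ S : Finset V, S ⊆ R → 0 ≤ d S := by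
    intro S hS; rw [hdsub S hS]
    exact div_nonneg (Nat.cast_nonneg _) (Nat.cast_nonneg _)
  -- Part 1
  have part1 : ∀ S : Finset V, S.Nonempty → (S ∩ R).Nonempty → d S ≤ d (S ∩ R) := by
    intro S hS hSR
    rw [hd S, hdsub (S ∩ R) Finset.inter_subset_right]
    have hnum : ((E.filter (fun e => e ⊆ S)).card : ℝ)
        - ε * (∑ v ∈ S \ R, deg v) / 2 ≤ ((E.filter (fun e => e ⊆ S ∩ R)).card : ℝ) := by
      have h1 : ((E.filter (fun e => e ⊆ S)).card : ℝ) ≤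
          ((E.filter (fun e => e ⊆ S ∩ R)).card : ℝ) + ∑ v ∈ S \ R, deg v := by
        rw [hvol]
        exact_mod_cast edge_split E S R
      have h2 : ∑ v ∈ S \ R, deg v ≤ ε * (∑ v ∈ S \ R, deg v) / 2 := by
        have h0 := hvol_nonneg (S \ R)
        have := mul_le_mul_of_nonneg_right hε h0
        linarith
      linarith
    refine div_le_div₀ (Nat.cast_nonneg _) hnum ?_ ?_
    · exact_mod_cast Finset.card_pos.mpr hSR
    · exact_mod_cast Finset.card_le_card Finset.inter_subset_left
  -- Part 2
  have part2 : ∀ S : Finset V, S.Nonempty → S ∩ R = ∅ → d S ≤ 0 := by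
    intro S hS hSR
    rw [hd S]
    apply div_nonpos_of_nonpos_of_nonneg
    · have hSd : S \ R = S := by
        rw [Finset.sdiff_eq_self_iff_disjoint, Finset.disjoint_iff_inter_eq_empty, hSR]
      rw [hSd, hvol]
      have h1 : 2 * (E.filter (fun e => e ⊆ S)).card ≤ ∑ e ∈ E, (e ∩ S).card :=
        edge_vol E hE S
      have h1' : 2 * ((E.filter (fun e => e ⊆ S)).card : ℝ) ≤
          ((∑ e ∈ E, (e ∩ S).card : ℕ) : ℝ) := by exact_mod_cast h1
      have h2 : (0:ℝ) ≤ ((∑ e ∈ E, (e ∩ S).card : ℕ) : ℝ) := Nat.cast_nonneg _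
      have h3 := mul_le_mul_of_nonneg_right hε h2
      linarith
    · exact Nat.cast_nonneg _
  -- Part 3
  have hRne : R.Nonempty := by
    obtain ⟨e, he⟩ := Finset.card_pos.mp hR
    simp only [Finset.mem_filter] at he
    obtain ⟨v, hv⟩ := Finset.card_pos.mp (lt_of_lt_of_le (by norm_num) (hE e he.1))
    exact ⟨v, he.2 hv⟩
  have part3 : 0 < d R := by
    rw [hdsub R le_rfl]
    apply div_pos
    · exact_mod_cast hR
    · exact_mod_cast Finset.card_pos.mpr hRne
  refine ⟨part1, part2, part3, ?_⟩
  -- Part 4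
  set A := {x : ℝ | ∃ S : Finset V, S.Nonempty ∧ x = d S}
  set B := {x : ℝ | ∃ S : Finset V, S.Nonempty ∧ S ⊆ R ∧ x = d S}
  have hAfin : A.Finite := by
    apply Set.Finite.subset (Set.finite_range d)
    rintro x ⟨S, -, rfl⟩; exact ⟨S, rfl⟩
  have hBfin : B.Finite := by
    apply Set.Finite.subset (Set.finite_range d)
    rintro x ⟨S, -, -, rfl⟩; exact ⟨S, rfl⟩
  have hBA : B ⊆ A := by rintro x ⟨S, hS, -, rfl⟩; exact ⟨S, hS, rfl⟩
  have hBne : B.Nonempty := ⟨d R, R, hRne, le_rfl, rfl⟩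
  have hAne : A.Nonempty := ⟨d R, R, hRne, rfl⟩
  refine le_antisymm ?_ (csSup_le_csSup hAfin.bddAbove hBne hBA)
  refine csSup_le hAne ?_
  rintro x ⟨S, hS, rfl⟩
  by_cases hSR : (S ∩ R).Nonempty
  · refine le_trans (part1 S hS hSR) (le_csSup hBfin.bddAbove ?_)
    exact ⟨S ∩ R, hSR, Finset.inter_subset_right, rfl⟩
  · have : S ∩ R = ∅ := Finset.not_nonempty_iff_eq_empty.mp hSR
    refine le_trans (part2 S hS this) (le_trans part3.le (le_csSup hBfin.bddAbove ?_))
    exact ⟨R, hRne, le_rfl, rfl⟩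
end

section
/- For a hypergraph H without self-loops, seed set R, and 1 ≤ ε < 2, the optimal anchored density d* = max over nonempty S ⊆ V of (e[S] − ε·vol(S∩\bar R)/2)/|S| satisfies d(R) ≤ d* ≤ \bar Δ(R), where \bar Δ(R) = max_{v∈R} ndeg(v), provided d(R) > 0. -/
/-- for `1 ≤ ε < 2` and `d(R) > 0`, the optimal anchored density
`d*` satisfies `d(R) ≤ d* ≤ max_{v∈R} ndeg(v)`. -/
theorem stmt14 {V : Type*} [Fintype V] [DecidableEq V]
    (E : Finset (Finset V)) (hE : ∀ e ∈ E, 2 ≤ e.card)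
    (R : Finset V)
    (ε : ℝ) (hε1 : 1 ≤ ε) (hε2 : ε < 2)
    (deg : V → ℝ) (hdeg : ∀ v, deg v = ((E.filter (fun e => v ∈ e)).card : ℝ))
    (ndeg : V → ℝ)
    (hndeg : ∀ v, ndeg v = ∑ e ∈ E.filter (fun e => v ∈ e), (1 : ℝ) / e.card)
    (d : Finset V → ℝ)
    (hd : ∀ S : Finset V, d S =
      (((E.filter (fun e => e ⊆ S)).card : ℝ)
          - ε * (∑ v ∈ S \ R, deg v) / 2) / S.card)
    (hdR : 0 < d R)
    (dstar : ℝ)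
    (hdstar : dstar = sSup {x : ℝ | ∃ S : Finset V, S.Nonempty ∧ x = d S}) :
    d R ≤ dstar ∧ dstar ≤ sSup (ndeg '' (R : Set V)) := by
  have hRne : R.Nonempty := by
    by_contra h
    rw [Finset.not_nonempty_iff_eq_empty] at h
    rw [hd R, h] at hdR
    simp at hdR
  have hndeg0 : ∀ v, 0 ≤ ndeg v := by
    intro v
    rw [hndeg]
    exact Finset.sum_nonneg fun e _ => by positivity
  have hdeg0 : ∀ v, 0 ≤ deg v := by
    intro v; rw [hdeg]; positivity
  set M := sSup (ndeg '' (R : Set V)) with hM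
  have hMbdd : BddAbove (ndeg '' (R : Set V)) := (R.finite_toSet.image ndeg).bddAbove
  have hMle : ∀ v ∈ R, ndeg v ≤ M := fun v hv => le_csSup hMbdd ⟨v, by simpa using hv, rfl⟩
  have hM0 : 0 ≤ M := (hndeg0 hRne.choose).trans (hMle _ hRne.choose_spec)
  have key : ∀ S : Finset V, S.Nonempty → d S ≤ M := by
    intro S hS
    have hScard : (0:ℝ) < S.card := by exact_mod_cast hS.card_pos
    rw [hd, div_le_iff₀ hScard]
    set F := E.filter (fun e => e ⊆ S) with hF
    -- counting identity
    have hcount : (F.card : ℝ) = ∑ v ∈ S, ∑ e ∈ F, (if v ∈ e then (1:ℝ)/e.card else 0) := by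
      rw [Finset.sum_comm]
      have h1 : ∀ e ∈ F, ∑ v ∈ S, (if v ∈ e then (1:ℝ)/e.card else 0) = 1 := by
        intro e he
        rw [hF, Finset.mem_filter] at he
        have hcard : e.card ≠ 0 := by have := hE e he.1; omega
        rw [Finset.sum_ite_mem, Finset.inter_eq_right.mpr he.2, Finset.sum_const,
          nsmul_eq_mul]
        field_simp
      rw [Finset.sum_congr rfl h1]
      simp
    have hFE : F ⊆ E := by rw [hF]; exact Finset.filter_subset _ _
    have hndeg' : ∀ v, ndeg v = ∑ e ∈ E, (if v ∈ e then (1:ℝ)/e.card else 0) := by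
      intro v
      rw [hndeg]
      rw [Finset.sum_filter]
    have hf_ndeg : ∀ v, (∑ e ∈ F, if v ∈ e then (1:ℝ)/e.card else 0) ≤ ndeg v := by
      intro v
      rw [hndeg']
      refine Finset.sum_le_sum_of_subset_of_nonneg hFE ?_
      intro e _ _
      split_ifs
      · positivity
      · exact le_rfl
    have hf_deg : ∀ v, (∑ e ∈ F, if v ∈ e then (1:ℝ)/e.card else 0) ≤ deg v / 2 := by
      intro v
      have h1 : (∑ e ∈ F, if v ∈ e then (1:ℝ)/e.card else 0)
          ≤ ∑ e ∈ F, (if v ∈ e then (1:ℝ)/2 else 0) := by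
        apply Finset.sum_le_sum
        intro e he
        split_ifs
        · apply one_div_le_one_div_of_le
          · norm_num
          · exact_mod_cast hE e (Finset.mem_of_mem_filter e he)
        · exact le_rfl
      have h2 : (∑ e ∈ F, if v ∈ e then (1:ℝ)/2 else 0)
          ≤ ∑ e ∈ E, (if v ∈ e then (1:ℝ)/2 else 0) := by
        refine Finset.sum_le_sum_of_subset_of_nonneg hFE ?_
        intro e _ _
        split_ifs
        · norm_num
        · exact le_rfl
      have h3 : (∑ e ∈ E, if v ∈ e then (1:ℝ)/2 else 0) = deg v / 2 := by
        rw [← Finset.sum_filter, Finset.sum_const, nsmul_eq_mul, hdeg]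
        ring
      linarith
    -- split the sum
    have hsplit : (F.card : ℝ)
        = (∑ v ∈ S ∩ R, ∑ e ∈ F, if v ∈ e then (1:ℝ)/e.card else 0)
          + ∑ v ∈ S \ R, ∑ e ∈ F, if v ∈ e then (1:ℝ)/e.card else 0 := by
      rw [hcount, Finset.sum_inter_add_sum_sdiff]
    have hb1 : (∑ v ∈ S ∩ R, ∑ e ∈ F, if v ∈ e then (1:ℝ)/e.card else 0)
        ≤ ((S ∩ R).card : ℝ) * M := by
      calc (∑ v ∈ S ∩ R, ∑ e ∈ F, if v ∈ e then (1:ℝ)/e.card else 0)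
          ≤ ∑ v ∈ S ∩ R, ndeg v :=
            Finset.sum_le_sum fun v _ => hf_ndeg v
        _ ≤ ∑ _v ∈ S ∩ R, M :=
            Finset.sum_le_sum fun v hv => hMle v (Finset.mem_of_mem_inter_right hv)
        _ = ((S ∩ R).card : ℝ) * M := by rw [Finset.sum_const, nsmul_eq_mul]
    have hb2 : (∑ v ∈ S \ R, ∑ e ∈ F, if v ∈ e then (1:ℝ)/e.card else 0)
        ≤ (∑ v ∈ S \ R, deg v) / 2 := by
      rw [Finset.sum_div]
      exact Finset.sum_le_sum fun v _ => hf_deg v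
    have hcardle : ((S ∩ R).card : ℝ) ≤ (S.card : ℝ) := by
      exact_mod_cast Finset.card_le_card (Finset.inter_subset_left)
    have hdegsum : 0 ≤ ∑ v ∈ S \ R, deg v := Finset.sum_nonneg fun v _ => hdeg0 v
    have heps : (∑ v ∈ S \ R, deg v) / 2 ≤ ε * (∑ v ∈ S \ R, deg v) / 2 := by
      nlinarith
    nlinarith [mul_le_mul_of_nonneg_right hcardle hM0]
  have hTne : d R ∈ {x : ℝ | ∃ S : Finset V, S.Nonempty ∧ x = d S} := ⟨R, hRne, rfl⟩
  have hTbdd : BddAbove {x : ℝ | ∃ S : Finset V, S.Nonempty ∧ x = d S} :=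
    ⟨M, by rintro x ⟨S, hS, rfl⟩; exact key S hS⟩
  constructor
  · rw [hdstar]; exact le_csSup hTbdd hTne
  · rw [hdstar]
    exact csSup_le ⟨_, hTne⟩ (by rintro x ⟨S, hS, rfl⟩; exact key S hS)
end

section
/- Let H be a hypergraph without self-loops, partition hyperedges into E_1 (size exactly 2) and E_2 (size ≥ 3). For any S ⊆ V with ε ≥ 1 and nvol(R) ≥ ε·vol(S∩\bar R)/2 − nvol(S∩\bar R), one has vol_2(S∩\bar R) ≤ 6·nvol(R), where vol_2(T) = Σ_{v∈T} |{e ∈ E_2 : v ∈ e}|. -/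
/-- if `nvol(R) ≥ ε·vol(S∩\bar R)/2 − nvol(S∩\bar R)` with
`ε ≥ 1`, then the volume of `S∩\bar R` restricted to hyperedges of size ≥ 3
is at most `6·nvol(R)`. -/
theorem stmt16 {V : Type*} [Fintype V] [DecidableEq V]
    (E : Finset (Finset V)) (hE : ∀ e ∈ E, 2 ≤ e.card)
    (R : Finset V) (ε : ℝ) (hε : 1 ≤ ε) (S : Finset V)
    (deg : V → ℝ) (hdeg : ∀ v, deg v = ((E.filter (fun e => v ∈ e)).card : ℝ))
    (ndeg : V → ℝ)
    (hndeg : ∀ v, ndeg v = ∑ e ∈ E.filter (fun e => v ∈ e), (1 : ℝ) / e.card)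
    (nvol : Finset V → ℝ) (hnvol : ∀ T : Finset V, nvol T = ∑ v ∈ T, ndeg v)
    (vol2 : Finset V → ℝ)
    (hvol2 : ∀ T : Finset V, vol2 T =
      ∑ v ∈ T, ((E.filter (fun e => v ∈ e ∧ 3 ≤ e.card)).card : ℝ))
    (hcond : ε * (∑ v ∈ S \ R, deg v) / 2 - nvol (S \ R) ≤ nvol R) :
    vol2 (S \ R) ≤ 6 * nvol R := by
  have key : ∀ v, ((E.filter (fun e => v ∈ e ∧ 3 ≤ e.card)).card : ℝ) / 6
      ≤ deg v / 2 - ndeg v := by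
    intro v
    rw [hdeg, hndeg]
    have hsub : E.filter (fun e => v ∈ e ∧ 3 ≤ e.card) ⊆ E.filter (fun e => v ∈ e) := by
      intro e he
      simp only [Finset.mem_filter] at he ⊢
      exact ⟨he.1, he.2.1⟩
    have h1 : ((E.filter (fun e => v ∈ e ∧ 3 ≤ e.card)).card : ℝ) / 6
        = ∑ _e ∈ E.filter (fun e => v ∈ e ∧ 3 ≤ e.card), (1:ℝ)/6 := by
      rw [Finset.sum_const, nsmul_eq_mul]; ring
    have h2 : ∑ _e ∈ E.filter (fun e => v ∈ e ∧ 3 ≤ e.card), (1:ℝ)/6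
        ≤ ∑ e ∈ E.filter (fun e => v ∈ e ∧ 3 ≤ e.card), ((1:ℝ)/2 - 1/e.card) := by
      apply Finset.sum_le_sum
      intro e he
      simp only [Finset.mem_filter] at he
      have h3 : (3:ℝ) ≤ e.card := by exact_mod_cast he.2.2
      have : (1:ℝ)/e.card ≤ 1/3 := by
        apply one_div_le_one_div_of_le <;> linarith
      linarith
    have h3 : ∑ e ∈ E.filter (fun e => v ∈ e ∧ 3 ≤ e.card), ((1:ℝ)/2 - 1/e.card)
        ≤ ∑ e ∈ E.filter (fun e => v ∈ e), ((1:ℝ)/2 - 1/e.card) := by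
      apply Finset.sum_le_sum_of_subset_of_nonneg hsub
      intro e he _
      simp only [Finset.mem_filter] at he
      have h2c : (2:ℝ) ≤ e.card := by exact_mod_cast hE e he.1
      have : (1:ℝ)/e.card ≤ 1/2 := by
        apply one_div_le_one_div_of_le <;> linarith
      linarith
    have h4 : ∑ e ∈ E.filter (fun e => v ∈ e), ((1:ℝ)/2 - 1/e.card)
        = ((E.filter (fun e => v ∈ e)).card : ℝ) / 2
          - ∑ e ∈ E.filter (fun e => v ∈ e), (1:ℝ)/e.card := by
      rw [Finset.sum_sub_distrib, Finset.sum_const, nsmul_eq_mul]; ring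
    linarith
  have hsum : vol2 (S \ R) / 6 ≤ (∑ v ∈ S \ R, deg v) / 2 - nvol (S \ R) := by
    rw [hvol2, hnvol]
    have := Finset.sum_le_sum (fun v (_ : v ∈ S \ R) => key v)
    calc (∑ v ∈ S \ R, ((E.filter (fun e => v ∈ e ∧ 3 ≤ e.card)).card : ℝ)) / 6
        = ∑ v ∈ S \ R, ((E.filter (fun e => v ∈ e ∧ 3 ≤ e.card)).card : ℝ) / 6 := by
          rw [Finset.sum_div]
      _ ≤ ∑ v ∈ S \ R, (deg v / 2 - ndeg v) := this
      _ = (∑ v ∈ S \ R, deg v) / 2 - ∑ v ∈ S \ R, ndeg v := by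
          rw [Finset.sum_sub_distrib, Finset.sum_div]
  have hdnn : 0 ≤ ∑ v ∈ S \ R, deg v := by
    apply Finset.sum_nonneg
    intro v _
    rw [hdeg]; positivity
  nlinarith [mul_nonneg (by linarith : (0:ℝ) ≤ ε - 1) hdnn]
end
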